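/- arXiv:1705.04610 — 2 statements merged into one kernel-verified Lean document; each statement's English description precedes it below -/
import Mathlib

section
/- The number of m-dimensional free direct summands (m-subspaces) of (Z/p^s Z)^n equals p^{(s-1)m(n-m)} · [n choose m]_p, where [n choose m]_p is the Gaussian binomial coefficient at q = p. -/
/-- An `m`-subspace of `(ZMod (p^s))^n`: a submodule spanned by the rows of an
`m × n` matrix having a right inverse (equivalently, a free direct summand of rank `m`). -/
def IsSubspace (p s n m : ℕ) (V : Submodule (ZMod (p ^ s)) (Fin n → ZMod (p ^ s))) : Prop :=
  ∃ M : Matrix (Fin m) (Fin n) (ZMod (p ^ s)),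
    (∃ B : Matrix (Fin n) (Fin m) (ZMod (p ^ s)), M * B = 1) ∧
    V = Submodule.span (ZMod (p ^ s)) (Set.range fun i => M i)

/-- The Gaussian binomial coefficient `[n choose m]_q = ∏_{i=1}^m (q^{n+1-i}-1)/(q^i-1)`. -/
def gaussBinomial (q n m : ℕ) : ℕ :=
  (∏ i ∈ Finset.range m, (q ^ (n - i) - 1)) / (∏ i ∈ Finset.range m, (q ^ (i + 1) - 1))


/-!
Call an `m × n` matrix over `R = ZMod (p ^ s)` a frame if it has a right inverse; the
`m`-subspaces are exactly the row spaces of frames. Two frames have the same row space iff they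
differ by an invertible left factor, and that factor is unique, so
`#frames(m, n) = #subspaces · #GL_m(R) = #subspaces · #frames(m, m)`.
Since `R → 𝔽_p` is a local homomorphism, a matrix is a frame iff its reduction is, so
`#frames(a, b) = p ^ ((s - 1) a b) · ∏_{i < a} (p ^ b - p ^ i)` by the count of linearly
independent families over `𝔽_p`. Dividing the two counts gives the Gaussian binomial.
-/

open Matrix Set Submodule

theorem AddMonoidHom.card_preimage_of_surjective {G H : Type*} [AddGroup G] [AddGroup H]
    (g : G →+ H) (hg : Function.Surjective g) (t : Set H) :
    Nat.card (g ⁻¹' t) = Nat.card g.ker * Nat.card t := by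
  let e := QuotientAddGroup.quotientKerEquivOfSurjective g hg
  change Nat.card (QuotientAddGroup.mk ⁻¹' (e ⁻¹' t)) = _
  rw [Nat.card_congr (QuotientAddGroup.preimageMkEquivAddSubgroupProdSet _ _), Nat.card_prod,
    Nat.card_preimage_of_injective e.injective (by simp [e.surjective.range_eq])]

namespace Matrix

variable {R S K ι κ : Type*}

def HasRightInverse [Semiring R] [Fintype κ] [DecidableEq ι] (M : Matrix ι κ R) : Prop :=
  ∃ B : Matrix κ ι R, M * B = 1

theorem map_surjective {f : R → S} (hf : Function.Surjective f) :
    Function.Surjective fun M : Matrix ι κ R => M.map f :=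
  fun N => ⟨N.map (Function.surjInv hf), by ext; simp [Function.surjInv_eq hf]⟩

section RowSpan

variable [CommRing R] [Fintype ι]

theorem span_row_mul_le (A : Matrix ι ι R) (M : Matrix ι κ R) :
    span R (range (A * M).row) ≤ span R (range M.row) := by
  rw [← range_vecMulLinear, ← range_vecMulLinear]
  rintro _ ⟨x, rfl⟩
  exact LinearMap.mem_range.mpr ⟨x ᵥ* A, by simp [Matrix.vecMul_vecMul]⟩

theorem exists_mul_eq_of_span_row_le {M M' : Matrix ι κ R}
    (h : span R (range M.row) ≤ span R (range M'.row)) : ∃ A : Matrix ι ι R, A * M' = M := by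
  rw [← range_vecMulLinear M'] at h
  choose A hA using fun i => h (subset_span (mem_range_self (f := M.row) i))
  exact ⟨Matrix.of A, funext hA⟩

theorem span_row_units_mul [DecidableEq ι] (U : (Matrix ι ι R)ˣ) (M : Matrix ι κ R) :
    span R (range ((U : Matrix ι ι R) * M).row) = span R (range M.row) := by
  refine le_antisymm (span_row_mul_le _ _) ?_
  simpa [← Matrix.mul_assoc] using span_row_mul_le (↑U⁻¹) ((U : Matrix ι ι R) * M)

end RowSpan

section CommRing

variable [CommRing R] [Fintype ι] [DecidableEq ι] [Fintype κ]

theorem HasRightInverse.units_mul {M : Matrix ι κ R} (hM : M.HasRightInverse)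
    (U : (Matrix ι ι R)ˣ) : ((U : Matrix ι ι R) * M).HasRightInverse := by
  obtain ⟨B, hB⟩ := hM
  refine ⟨B * (↑U⁻¹ : Matrix ι ι R), ?_⟩
  rw [Matrix.mul_assoc, ← Matrix.mul_assoc M, hB, Matrix.one_mul, U.mul_inv]

theorem HasRightInverse.mul_left_injective {M : Matrix ι κ R} (hM : M.HasRightInverse) :
    Function.Injective fun A : Matrix ι ι R => A * M := by
  obtain ⟨B, hB⟩ := hM
  intro A A' h
  simpa [Matrix.mul_assoc, hB] using congrArg (· * B) h

theorem HasRightInverse.exists_units_mul_eq {M M' : Matrix ι κ R} (hM : M.HasRightInverse)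
    (h : span R (range M.row) = span R (range M'.row)) :
    ∃ U : (Matrix ι ι R)ˣ, (U : Matrix ι ι R) * M' = M := by
  obtain ⟨A, hA⟩ := exists_mul_eq_of_span_row_le h.le
  obtain ⟨A', hA'⟩ := exists_mul_eq_of_span_row_le h.ge
  have hAA' : A * A' = 1 :=
    hM.mul_left_injective (by simp only [Matrix.mul_assoc, hA', hA, Matrix.one_mul])
  exact ⟨⟨A, A', hAA', mul_eq_one_comm.mp hAA'⟩, hA⟩

theorem card_hasRightInverse_eq_mul_card_units :
    Nat.card {M : Matrix ι κ R // M.HasRightInverse} =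
      Nat.card {V : Submodule R (κ → R) //
        ∃ M : Matrix ι κ R, M.HasRightInverse ∧ V = span R (range M.row)} *
      Nat.card (Matrix ι ι R)ˣ := by
  set S := {V : Submodule R (κ → R) //
    ∃ M : Matrix ι κ R, M.HasRightInverse ∧ V = span R (range M.row)}
  choose frame hframe hspan using fun V : S => V.2
  let g : S × (Matrix ι ι R)ˣ → {M : Matrix ι κ R // M.HasRightInverse} :=
    fun x => ⟨(x.2 : Matrix ι ι R) * frame x.1, (hframe x.1).units_mul x.2⟩
  have hg : Function.Bijective g := by
    constructor
    · rintro ⟨V, U⟩ ⟨V', U'⟩ h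
      replace h : (U : Matrix ι ι R) * frame V = (U' : Matrix ι ι R) * frame V' :=
        congrArg Subtype.val h
      obtain rfl : V = V' := Subtype.ext <| by
        rw [hspan, hspan, ← span_row_units_mul U (frame V), h, span_row_units_mul]
      exact Prod.ext rfl (Units.ext ((hframe V).mul_left_injective h))
    · rintro ⟨M, hM⟩
      let V : S := ⟨span R (range M.row), M, hM, rfl⟩
      obtain ⟨U, hU⟩ := hM.exists_units_mul_eq (hspan V)
      exact ⟨(V, U), Subtype.ext hU⟩
  rw [← Nat.card_prod, Nat.card_congr (Equiv.ofBijective g hg)]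

theorem hasRightInverse_iff_isUnit {A : Matrix ι ι R} : A.HasRightInverse ↔ IsUnit A :=
  isUnit_iff_exists_inv.symm

theorem card_units_eq_card_hasRightInverse :
    Nat.card (Matrix ι ι R)ˣ = Nat.card {A : Matrix ι ι R // A.HasRightInverse} := by
  rw [Nat.card_congr (Equiv.ofInjective _ Units.val_injective)]
  exact Nat.card_congr (Equiv.subtypeEquivRight fun _ => hasRightInverse_iff_isUnit.symm)

variable [CommRing S]

theorem hasRightInverse_map_iff (f : R →+* S) [IsLocalHom f] (hf : Function.Surjective f)
    {M : Matrix ι κ R} : (M.map f).HasRightInverse ↔ M.HasRightInverse := by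
  refine ⟨fun ⟨B', hB'⟩ => ?_, fun ⟨B, hB⟩ => ⟨B.map f, ?_⟩⟩
  · obtain ⟨B, rfl⟩ := map_surjective hf B'
    have hdet : IsUnit (M * B).det := by
      refine isUnit_of_map_unit f _ ?_
      rw [RingHom.map_det, RingHom.mapMatrix_apply, Matrix.map_mul, hB', det_one]
      exact isUnit_one
    exact ⟨B * (M * B)⁻¹, by rw [← Matrix.mul_assoc, mul_nonsing_inv _ hdet]⟩
  · rw [← Matrix.map_mul, hB, Matrix.map_one _ f.map_zero f.map_one]

theorem card_hasRightInverse_mul_card_eq (f : R →+* S) [IsLocalHom f]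
    (hf : Function.Surjective f) :
    Nat.card {M : Matrix ι κ R // M.HasRightInverse} * Nat.card (Matrix ι κ S) =
      Nat.card {N : Matrix ι κ S // N.HasRightInverse} * Nat.card (Matrix ι κ R) := by
  let g := (f : R →+ S).mapMatrix (m := ι) (n := κ)
  have hg : Function.Surjective g := map_surjective hf
  have hframes : Nat.card {M : Matrix ι κ R // M.HasRightInverse} =
      Nat.card g.ker * Nat.card {N : Matrix ι κ S // N.HasRightInverse} :=
    (Nat.card_congr (Equiv.subtypeEquivRight fun M => (hasRightInverse_map_iff f hf).symm)).trans
      (g.card_preimage_of_surjective hg {N | N.HasRightInverse})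
  have hall := g.card_preimage_of_surjective hg univ
  rw [preimage_univ, Nat.card_univ, Nat.card_univ] at hall
  rw [hframes, hall]
  ring

end CommRing

section Field

variable [Field K] [Fintype ι] [DecidableEq ι] [Fintype κ]

theorem hasRightInverse_iff_linearIndependent {M : Matrix ι κ K} :
    M.HasRightInverse ↔ LinearIndependent K M.row := by
  constructor
  · rintro ⟨B, hB⟩
    rw [← vecMul_injective_iff]
    intro x y h
    simpa [vecMul_vecMul, hB] using congrArg (· ᵥ* B) h
  · intro h
    rw [HasRightInverse, ← mulVec_surjective_iff_exists_right_inverse, ← coe_mulVecLin,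
      ← LinearMap.range_eq_top]
    apply Submodule.eq_top_of_finrank_eq
    rw [← rank, h.rank_matrix, Module.finrank_fintype_fun_eq_card]

theorem card_hasRightInverse_of_finite [Fintype K] {a : ℕ} (ha : a ≤ Fintype.card κ) :
    Nat.card {M : Matrix (Fin a) κ K // M.HasRightInverse} =
      ∏ i ∈ Finset.range a, (Fintype.card K ^ Fintype.card κ - Fintype.card K ^ i) := by
  have h := card_linearIndependent (K := K) (V := κ → K) (k := a)
    (by rwa [Module.finrank_fintype_fun_eq_card])
  rw [Module.finrank_fintype_fun_eq_card, Fin.prod_univ_eq_prod_range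
    (fun i => Fintype.card K ^ Fintype.card κ - Fintype.card K ^ i)] at h
  exact (Nat.card_congr
    (Equiv.subtypeEquivRight fun M => hasRightInverse_iff_linearIndependent)).trans h

end Field

end Matrix

theorem ZMod.isLocalHom_castHom_pow {p s : ℕ} (hp : p.Prime) (hs : s ≠ 0) :
    IsLocalHom (ZMod.castHom (dvd_pow_self p hs) (ZMod p)) := by
  have : NeZero (p ^ s) := ⟨pow_ne_zero s hp.ne_zero⟩
  refine ⟨fun x hx => ?_⟩
  rw [← ZMod.natCast_zmod_val x, map_natCast, ZMod.isUnit_iff_coprime] at hx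
  rw [← ZMod.natCast_zmod_val x, ZMod.isUnit_iff_coprime]
  exact Nat.Coprime.pow_right s hx

theorem Matrix.card_hasRightInverse_zmod_pow {p s a b : ℕ} (hp : p.Prime) (hs : s ≠ 0)
    (hab : a ≤ b) :
    Nat.card {M : Matrix (Fin a) (Fin b) (ZMod (p ^ s)) // M.HasRightInverse} =
      p ^ ((s - 1) * (a * b)) * ∏ i ∈ Finset.range a, (p ^ b - p ^ i) := by
  have := Fact.mk hp
  have := ZMod.isLocalHom_castHom_pow hp hs
  have h := card_hasRightInverse_mul_card_eq (ι := Fin a) (κ := Fin b)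
    (ZMod.castHom (dvd_pow_self p hs) (ZMod p)) (ZMod.ringHom_surjective _)
  rw [card_hasRightInverse_of_finite (by simpa), ZMod.card, Fintype.card_fin] at h
  simp only [Nat.card_eq_fintype_card, Matrix, Fintype.card_fun, ZMod.card, Fintype.card_fin] at h
  have hpow : ((p ^ s) ^ b) ^ a = p ^ ((s - 1) * (a * b)) * (p ^ b) ^ a := by
    obtain ⟨t, rfl⟩ : ∃ t, s = t + 1 := ⟨s - 1, by omega⟩
    rw [Nat.add_sub_cancel]
    ring
  rw [hpow, ← mul_assoc, mul_comm (∏ i ∈ _, _)] at h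
  exact Nat.eq_of_mul_eq_mul_right (by positivity [hp.pos]) h

theorem Nat.prod_range_pow_sub_pow (q : ℕ) {a b : ℕ} (hab : a ≤ b) :
    ∏ i ∈ Finset.range a, (q ^ b - q ^ i) =
      (∏ i ∈ Finset.range a, q ^ i) * ∏ i ∈ Finset.range a, (q ^ (b - i) - 1) := by
  rw [← Finset.prod_mul_distrib]
  refine Finset.prod_congr rfl fun i hi => ?_
  rw [Nat.mul_sub, mul_one, ← pow_add, Nat.add_sub_cancel' (by grind)]

theorem Nat.prod_range_pow_sub_pow_self (q a : ℕ) :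
    ∏ i ∈ Finset.range a, (q ^ a - q ^ i) =
      (∏ i ∈ Finset.range a, q ^ i) * ∏ i ∈ Finset.range a, (q ^ (i + 1) - 1) := by
  rw [Nat.prod_range_pow_sub_pow q le_rfl, ← Finset.prod_range_reflect (fun i => q ^ (i + 1) - 1)]
  congr 1
  refine Finset.prod_congr rfl fun i hi => ?_
  rw [Finset.mem_range] at hi
  congr 2
  omega

theorem Nat.coprime_prod_range_pow_succ_sub_one {q : ℕ} (hq : 0 < q) (a e : ℕ) :
    Nat.Coprime (∏ i ∈ Finset.range a, (q ^ (i + 1) - 1)) (q ^ e) := by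
  refine Nat.Coprime.pow_right _ (Nat.Coprime.prod_left fun i _ => ?_)
  have hsucc : q ^ (i + 1) - 1 + 1 = q ^ (i + 1) := Nat.sub_add_cancel (Nat.one_le_pow _ _ hq)
  exact Nat.Coprime.coprime_dvd_right (hsucc ▸ dvd_pow_self q i.succ_ne_zero) (by simp)

theorem Nat.eq_mul_div_of_mul_eq_mul {a b c x : ℕ} (ha : 0 < a) (hac : Nat.Coprime a c)
    (h : a * x = c * b) : x = c * (b / a) := by
  obtain ⟨d, rfl⟩ := hac.dvd_of_dvd_mul_left ⟨x, h.symm⟩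
  rw [Nat.mul_div_cancel_left d ha]
  exact Nat.eq_of_mul_eq_mul_left ha (by rw [h]; ring)

theorem stmt_13_general (p s m n : ℕ) (hp : p.Prime) (hs : 1 ≤ s) (hmn : m < n) :
    Nat.card {V : Submodule (ZMod (p ^ s)) (Fin n → ZMod (p ^ s)) // IsSubspace p s n m V} =
      p ^ ((s - 1) * m * (n - m)) * gaussBinomial p n m := by
  have hs0 : s ≠ 0 := by omega
  have hcount : Nat.card {V // IsSubspace p s n m V} *
      Nat.card (Matrix (Fin m) (Fin m) (ZMod (p ^ s)))ˣ =
      Nat.card {M : Matrix (Fin m) (Fin n) (ZMod (p ^ s)) // M.HasRightInverse} :=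
    card_hasRightInverse_eq_mul_card_units.symm
  rw [card_units_eq_card_hasRightInverse, card_hasRightInverse_zmod_pow hp hs0 hmn.le,
    card_hasRightInverse_zmod_pow hp hs0 le_rfl, Nat.prod_range_pow_sub_pow p hmn.le,
    Nat.prod_range_pow_sub_pow_self] at hcount
  have hexp : (s - 1) * (m * n) = (s - 1) * (m * m) + (s - 1) * m * (n - m) := by
    obtain ⟨k, rfl⟩ : ∃ k, n = m + k := ⟨n - m, by omega⟩
    rw [Nat.add_sub_cancel_left]
    ring
  rw [hexp, pow_add] at hcount
  refine Nat.eq_mul_div_of_mul_eq_mul (Finset.prod_pos fun i _ => ?_)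
    (Nat.coprime_prod_range_pow_succ_sub_one hp.pos _ _) ?_
  · exact Nat.sub_pos_of_lt (Nat.one_lt_pow i.succ_ne_zero hp.one_lt)
  · refine Nat.eq_of_mul_eq_mul_left
      (n := p ^ ((s - 1) * (m * m)) * ∏ i ∈ Finset.range m, p ^ i) (by positivity [hp.pos]) ?_
    linear_combination hcount

theorem stmt_13 (p s m n : ℕ) (hp : p.Prime) (hs : 1 ≤ s) (hm : 1 ≤ m) (hmn : m < n) :
    Nat.card {V : Submodule (ZMod (p ^ s)) (Fin n → ZMod (p ^ s)) // IsSubspace p s n m V} =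
      p ^ ((s - 1) * m * (n - m)) * gaussBinomial p n m :=
  stmt_13_general p s m n hp hs hmn
end

section
/- Let P be an (m-1)-subspace and Q an (m+1)-subspace of (Z/p^s Z)^n with P ⊂ Q. Then the number of m-subspaces X with P ⊂ X ⊂ Q equals p^{s-1}(p+1). -/
open Submodule LinearMap Module

def IsSplitRange (R : Type*) [Ring R] (F : Type*) {M : Type*} [AddCommGroup F] [Module R F]
    [AddCommGroup M] [Module R M] (X : Submodule R M) : Prop :=
  ∃ f : F →ₗ[R] M, (∃ g : M →ₗ[R] F, g ∘ₗ f = LinearMap.id) ∧ range f = X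

namespace IsSplitRange

section Ring

variable {R F F' G M N : Type*} [Ring R] [AddCommGroup F] [Module R F] [AddCommGroup F']
  [Module R F'] [AddCommGroup G] [Module R G] [AddCommGroup M] [Module R M] [AddCommGroup N]
  [Module R N] {X P : Submodule R M}

theorem congr (e : F ≃ₗ[R] F') (h : IsSplitRange R F X) : IsSplitRange R F' X := by
  obtain ⟨f, ⟨g, hgf⟩, rfl⟩ := h
  refine ⟨f ∘ₗ e.symm.toLinearMap, ⟨e.toLinearMap ∘ₗ g, ?_⟩,
    range_comp_of_range_eq_top f e.symm.range⟩
  ext x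
  simpa using congr(e ($hgf (e.symm x)))

theorem of_retraction (e : F ≃ₗ[R] X) (ρ : M →ₗ[R] X) (hρ : ∀ x : X, ρ x = x) :
    IsSplitRange R F X :=
  ⟨X.subtype ∘ₗ e.toLinearMap, ⟨e.symm.toLinearMap ∘ₗ ρ, by ext; simp [hρ]⟩, by
    rw [range_comp_of_range_eq_top _ e.range, range_subtype]⟩

theorem nonempty_linearEquiv (h : IsSplitRange R F X) : Nonempty (F ≃ₗ[R] X) := by
  obtain ⟨f, ⟨g, hgf⟩, rfl⟩ := h
  exact ⟨.ofInjective f (Function.LeftInverse.injective (g := g) fun x => congr($hgf x))⟩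

theorem exists_retraction (h : IsSplitRange R F X) : ∃ ρ : M →ₗ[R] X, ∀ x : X, ρ x = x := by
  obtain ⟨f, ⟨g, hgf⟩, rfl⟩ := h
  refine ⟨(f ∘ₗ g).codRestrict (range f) fun x => mem_range_self f (g x), ?_⟩
  rintro ⟨_, y, rfl⟩
  ext
  simp [← comp_apply g f, hgf]

theorem exists_mkQ_comp_eq_id (h : IsSplitRange R F P) :
    ∃ σ : (M ⧸ P) →ₗ[R] M, P.mkQ ∘ₗ σ = LinearMap.id := by
  obtain ⟨ρ, hρ⟩ := h.exists_retraction
  have hc : IsCompl P (ker ρ) := isCompl_of_proj hρ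
  exact ⟨(ker ρ).subtype ∘ₗ (P.quotientEquivOfIsCompl _ hc).toLinearMap,
    LinearMap.ext (mk_quotientEquivOfIsCompl_apply hc)⟩

theorem map_iff {j : M →ₗ[R] N} {r : N →ₗ[R] M} (hrj : r ∘ₗ j = LinearMap.id)
    {Y : Submodule R M} : IsSplitRange R F (Y.map j) ↔ IsSplitRange R F Y := by
  constructor
  · rintro ⟨f, ⟨g, hgf⟩, hf⟩
    have hjr : ∀ x, j (r (f x)) = f x := fun x => by
      obtain ⟨y, -, hy⟩ : f x ∈ Y.map j := hf ▸ mem_range_self f x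
      rw [← hy, ← comp_apply r j, hrj, id_apply]
    refine ⟨r ∘ₗ f, ⟨g ∘ₗ j, ?_⟩, ?_⟩
    · ext x
      simpa [hjr] using congr($hgf x)
    · rw [range_comp, hf, ← map_comp, hrj, map_id]
  · rintro ⟨f, ⟨g, hgf⟩, rfl⟩
    refine ⟨j ∘ₗ f, ⟨g ∘ₗ r, ?_⟩, range_comp f j⟩
    rw [comp_assoc, ← comp_assoc f j r, hrj, id_comp, hgf]

theorem comap_mkQ (hP : IsSplitRange R F P) {Y : Submodule R (M ⧸ P)}
    (hY : IsSplitRange R G Y) : IsSplitRange R (F × G) (Y.comap P.mkQ) := by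
  obtain ⟨σ, hσ⟩ := hP.exists_mkQ_comp_eq_id
  obtain ⟨h, ⟨rh, hrh⟩, rfl⟩ := hP
  obtain ⟨f, ⟨g, hgf⟩, rfl⟩ := hY
  have hσ' (q) : (Submodule.Quotient.mk (σ q) : M ⧸ range h) = q := congr($hσ q)
  have hh (x) : (Submodule.Quotient.mk (h x) : M ⧸ range h) = 0 :=
    (Quotient.mk_eq_zero _).2 ⟨x, rfl⟩
  refine ⟨h.coprod (σ ∘ₗ f),
    ⟨(rh ∘ₗ (LinearMap.id - σ ∘ₗ (range h).mkQ)).prod (g ∘ₗ (range h).mkQ), ?_⟩, ?_⟩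
  · ext x <;> simp [hσ', hh, ← comp_apply rh h, hrh, ← comp_apply g f, hgf]
  · ext v
    constructor
    · rintro ⟨⟨x, y⟩, rfl⟩
      simp [hσ', hh]
    · rintro ⟨y, hy⟩
      obtain ⟨x, hx⟩ : v - σ (f y) ∈ range h := (Quotient.mk_eq_zero _).1 (by simp [hσ', hy])
      exact ⟨(x, y), by simp [hx]⟩

end Ring

section Transport

variable {R F M N : Type*} [Ring R] [AddCommGroup F] [Module R F] [AddCommGroup M] [Module R M]
  [AddCommGroup N] [Module R N]

theorem card_map_le_le_range_eq {j : M →ₗ[R] N} {r : N →ₗ[R] M} (hrj : r ∘ₗ j = LinearMap.id)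
    (A : Submodule R M) :
    Nat.card {X : Submodule R N // IsSplitRange R F X ∧ A.map j ≤ X ∧ X ≤ range j} =
      Nat.card {X : Submodule R M // IsSplitRange R F X ∧ A ≤ X} :=
  have hj : Function.Injective j := Function.LeftInverse.injective (g := r) fun x => congr($hrj x)
  Nat.card_congr
    { toFun X := ⟨X.1.comap j, (map_iff hrj).1 (by rw [map_comap_eq_self X.2.2.2]; exact X.2.1),
        map_le_iff_le_comap.1 X.2.2.1⟩
      invFun Y := ⟨Y.1.map j, (map_iff hrj).2 Y.2.1, map_mono Y.2.2, map_le_range⟩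
      left_inv X := Subtype.ext <| map_comap_eq_self X.2.2.2
      right_inv Y := Subtype.ext <| comap_map_eq_of_injective hj Y.1 }

theorem card_congr_linearEquiv (e : M ≃ₗ[R] N) :
    Nat.card {X : Submodule R M // IsSplitRange R F X} =
      Nat.card {X : Submodule R N // IsSplitRange R F X} := by
  simpa using (card_map_le_le_range_eq (j := e.toLinearMap) (r := e.symm.toLinearMap)
    (by ext; simp) ⊥).symm

end Transport

section CommRing

variable {R F M : Type*} [CommRing R] [AddCommGroup F] [Module R F] [AddCommGroup M]
  [Module R M] {X P : Submodule R M}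

theorem rank_unique [Nontrivial R] {a b : ℕ} (ha : IsSplitRange R (Fin a → R) X)
    (hb : IsSplitRange R (Fin b → R) X) : a = b := by
  obtain ⟨ea⟩ := ha.nonempty_linearEquiv
  obtain ⟨eb⟩ := hb.nonempty_linearEquiv
  simpa using (ea.trans eb.symm).finrank_eq

theorem lt_iff_le [Nontrivial R] {a b : ℕ} (hX : IsSplitRange R (Fin a → R) X)
    {Y : Submodule R M} (hY : IsSplitRange R (Fin b → R) Y) (hab : a ≠ b) : X < Y ↔ X ≤ Y :=
  ⟨le_of_lt, fun hle => hle.lt_of_ne fun hXY => hab (hX.rank_unique (hXY ▸ hY))⟩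

variable [IsLocalRing R]

theorem exists_of_comap_mkQ {E : Type*} [AddCommGroup E] [Module R E] [Module.Finite R E]
    [Module.Projective R E] (hP : IsSplitRange R F P) {Y : Submodule R (M ⧸ P)}
    (hX : IsSplitRange R E (Y.comap P.mkQ)) : ∃ d : ℕ, IsSplitRange R (Fin d → R) Y := by
  -- `Y` is a retract of `Y.comap P.mkQ ≅ E`, so finite projective, so free as `R` is local.
  obtain ⟨σ, hσ⟩ := hP.exists_mkQ_comp_eq_id
  have hσ' (q) : P.mkQ (σ q) = q := congr($hσ q)
  obtain ⟨e⟩ := hX.nonempty_linearEquiv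
  obtain ⟨ρ, hρ⟩ := hX.exists_retraction
  let i : Y →ₗ[R] Y.comap P.mkQ :=
    (σ ∘ₗ Y.subtype).codRestrict _ fun y => by simp [hσ']
  let s : Y.comap P.mkQ →ₗ[R] Y := (P.mkQ ∘ₗ (Y.comap P.mkQ).subtype).codRestrict Y fun x => x.2
  have hsi (y : Y) : s (i y) = y := Subtype.ext (hσ' y)
  have : Module.Projective R (Y.comap P.mkQ) := .of_equiv' e
  have : Module.Finite R (Y.comap P.mkQ) := .equiv e
  have : Module.Projective R Y := .of_split i s (LinearMap.ext hsi)
  have : Module.Finite R Y := .of_surjective s (Function.LeftInverse.surjective hsi)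
  have : Module.Free R Y := Module.free_of_flat_of_isLocalRing
  refine ⟨finrank R Y, of_retraction (Module.finBasis R Y).equivFun.symm (s ∘ₗ ρ ∘ₗ σ) ?_⟩
  intro y
  simpa [hσ'] using hρ (i y) ▸ hsi y

theorem comap_mkQ_iff {a d : ℕ} (hP : IsSplitRange R (Fin a → R) P) {Y : Submodule R (M ⧸ P)} :
    IsSplitRange R (Fin (a + d) → R) (Y.comap P.mkQ) ↔ IsSplitRange R (Fin d → R) Y := by
  have extend {d' : ℕ} (hY : IsSplitRange R (Fin d' → R) Y) :
      IsSplitRange R (Fin (a + d') → R) (Y.comap P.mkQ) :=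
    (hP.comap_mkQ hY).congr ((LinearEquiv.sumArrowLequivProdArrow _ _ R R).symm.trans
      (LinearEquiv.funCongrLeft R R finSumFinEquiv.symm))
  refine ⟨fun hX => ?_, extend⟩
  obtain ⟨d', hY⟩ := hP.exists_of_comap_mkQ hX
  obtain rfl : d' = d := by have := (extend hY).rank_unique hX; omega
  exact hY

theorem card_le_eq_card_quotient {a d : ℕ} (hP : IsSplitRange R (Fin a → R) P) :
    Nat.card {X : Submodule R M // IsSplitRange R (Fin (a + d) → R) X ∧ P ≤ X} =
      Nat.card {Y : Submodule R (M ⧸ P) // IsSplitRange R (Fin d → R) Y} :=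
  Nat.card_congr
    { toFun X := ⟨X.1.map P.mkQ, (comap_mkQ_iff hP).1 <| by
        rw [comap_map_mkQ, sup_eq_right.2 X.2.2]; exact X.2.1⟩
      invFun Y := ⟨Y.1.comap P.mkQ, (comap_mkQ_iff hP).2 Y.2, (ker_mkQ P).ge.trans (ker_le_comap _)⟩
      left_inv X := Subtype.ext <| by simp only [comap_map_mkQ, sup_eq_right.2 X.2.2]
      right_inv Y := Subtype.ext <| map_comap_eq_of_surjective P.mkQ_surjective Y.1 }

theorem nonempty_quotient_linearEquiv {a b : ℕ} {P : Submodule R (Fin (a + b) → R)}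
    (hP : IsSplitRange R (Fin a → R) P) : Nonempty (((Fin (a + b) → R) ⧸ P) ≃ₗ[R] (Fin b → R)) := by
  have htop : IsSplitRange R (Fin (a + b) → R) ((⊤ : Submodule R (_ ⧸ P)).comap P.mkQ) := by
    rw [comap_top]
    exact ⟨LinearMap.id, ⟨LinearMap.id, rfl⟩, range_id⟩
  obtain ⟨e⟩ := ((comap_mkQ_iff hP).1 htop).nonempty_linearEquiv
  exact ⟨(e.trans topEquiv).symm⟩

end CommRing

end IsSplitRange

section Lines

variable {R M : Type*} [CommRing R] [AddCommGroup M] [Module R M]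

theorem isSplitRange_self_iff {Y : Submodule R M} :
    IsSplitRange R R Y ↔ ∃ v : M, ∃ φ : M →ₗ[R] R, φ v = 1 ∧ Y = span R {v} := by
  constructor
  · rintro ⟨f, ⟨φ, hφ⟩, rfl⟩
    refine ⟨f 1, φ, by simpa using congr($hφ 1), ?_⟩
    rw [← range_toSpanSingleton]
    congr 1
    ext
    simp
  · rintro ⟨v, φ, hφ, rfl⟩
    exact ⟨toSpanSingleton R M v, ⟨φ, by ext; simp [hφ]⟩, range_toSpanSingleton v⟩

theorem eq_of_span_singleton_eq {ι : Type*} {u v : ι → R} {i : ι}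
    (h : span R {u} = span R {v}) (hu : u i = 1) (hv : v i = 1) : u = v := by
  obtain ⟨t, rfl⟩ := mem_span_singleton.1 (h ▸ mem_span_singleton_self u)
  obtain rfl : t = 1 := by simpa [hv] using hu
  exact one_smul R v

theorem isUnit_or_isUnit_of_apply_eq_one [IsLocalRing R] {v : Fin 2 → R} {φ : (Fin 2 → R) →ₗ[R] R}
    (h : φ v = 1) : IsUnit (v 0) ∨ IsUnit (v 1) := by
  rw [pi_apply_eq_sum_univ, Fin.sum_univ_two, smul_eq_mul, smul_eq_mul] at h
  exact (IsLocalRing.isUnit_or_isUnit_of_add_one h).imp isUnit_of_mul_isUnit_left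
    isUnit_of_mul_isUnit_left

def lineOfNormalForm : R ⊕ nonunits R → Submodule R (Fin 2 → R) :=
  Sum.elim (fun b => span R {![1, b]}) (fun c => span R {![c.1, 1]})

theorem lineOfNormalForm_injective : Function.Injective (lineOfNormalForm (R := R)) := by
  have ne (b : R) (c : nonunits R) : span R {![1, b]} ≠ span R {![c.1, 1]} := fun h => by
    obtain ⟨t, ht⟩ := mem_span_singleton.1 (h ▸ mem_span_singleton_self ![1, b])
    exact c.2 (IsUnit.of_mul_eq_one_right t (by simpa using congr_fun ht 0))
  rintro (b | c) (b' | c') h <;> simp only [lineOfNormalForm, Sum.elim_inl, Sum.elim_inr] at h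
  · simpa using congr_fun (eq_of_span_singleton_eq (i := 0) h rfl rfl) 1
  · exact absurd h (ne b c')
  · exact absurd h.symm (ne b' c)
  · simpa [Subtype.ext_iff] using congr_fun (eq_of_span_singleton_eq (i := 1) h rfl rfl) 0

variable [IsLocalRing R]

theorem range_lineOfNormalForm :
    Set.range (lineOfNormalForm (R := R)) = {Y | IsSplitRange R R Y} := by
  ext Y
  simp only [Set.mem_ofPred_eq, isSplitRange_self_iff]
  constructor
  · rintro ⟨b | c, rfl⟩
    · exact ⟨_, LinearMap.proj 0, by simp, rfl⟩
    · exact ⟨_, LinearMap.proj 1, by simp, rfl⟩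
  · rintro ⟨v, φ, hφ, rfl⟩
    by_cases h0 : IsUnit (v 0)
    · refine ⟨.inl (Ring.inverse (v 0) * v 1), ?_⟩
      rw [lineOfNormalForm, Sum.elim_inl, ← span_singleton_smul_eq h0]
      congr 2
      funext j
      fin_cases j <;> simp [Ring.mul_inverse_cancel_left _ _ h0]
    · have h1 := (isUnit_or_isUnit_of_apply_eq_one hφ).resolve_left h0
      refine ⟨.inr ⟨Ring.inverse (v 1) * v 0, fun hc => h0 ?_⟩, ?_⟩
      · simpa [Ring.mul_inverse_cancel_left _ _ h1] using h1.mul hc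
      · rw [lineOfNormalForm, Sum.elim_inr, ← span_singleton_smul_eq h1]
        congr 2
        funext j
        fin_cases j <;> simp [Ring.mul_inverse_cancel_left _ _ h1]

theorem card_isSplitRange_self_fin_two [Finite R] :
    Nat.card {Y : Submodule R (Fin 2 → R) // IsSplitRange R R Y} =
      Nat.card R + Nat.card (nonunits R) := by
  rw [← Nat.card_sum]
  exact (Nat.card_congr ((Equiv.ofInjective _ lineOfNormalForm_injective).trans
    (Equiv.setCongr range_lineOfNormalForm))).symm

end Lines

namespace ZMod

variable {p s : ℕ}

theorem isLocalRing_prime_pow (hp : p.Prime) (hs : s ≠ 0) : IsLocalRing (ZMod (p ^ s)) := by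
  have : Fact (1 < p ^ s) := ⟨Nat.one_lt_pow hs hp.one_lt⟩
  have mem_nonunits (a : ℕ) : (a : ZMod (p ^ s)) ∈ nonunits _ ↔ p ∣ a := by
    rw [mem_nonunits_iff, isUnit_natCast_iff_not_dvd_pow hp (Nat.pos_of_ne_zero hs), not_not]
  refine .of_nonunits_add fun a b ha hb => ?_
  obtain ⟨a, rfl⟩ := natCast_zmod_surjective a
  obtain ⟨b, rfl⟩ := natCast_zmod_surjective b
  rw [mem_nonunits] at ha hb
  rw [← Nat.cast_add, mem_nonunits]
  exact dvd_add ha hb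

theorem card_nonunits_prime_pow (hp : p.Prime) (hs : s ≠ 0) :
    Nat.card (nonunits (ZMod (p ^ s))) = p ^ (s - 1) := by
  have : NeZero (p ^ s) := ⟨pow_ne_zero _ hp.ne_zero⟩
  let e : {x : ZMod (p ^ s) // IsUnit x} ≃ (ZMod (p ^ s))ˣ :=
    { toFun x := x.2.unit
      invFun u := ⟨u, u.isUnit⟩
      left_inv x := Subtype.ext x.2.unit_spec
      right_inv u := Units.ext rfl }
  have hunits : Nat.card {x : ZMod (p ^ s) // IsUnit x} = p ^ (s - 1) * (p - 1) := by
    rw [Nat.card_congr e, Nat.card_eq_fintype_card, card_units_eq_totient,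
      Nat.totient_prime_pow hp (Nat.pos_of_ne_zero hs)]
  have hsum := Nat.card_congr (Equiv.sumCompl fun x : ZMod (p ^ s) => IsUnit x)
  rw [Nat.card_sum, hunits, Nat.card_zmod] at hsum
  change _ + Nat.card (nonunits _) = _ at hsum
  have hps : p ^ s = p ^ (s - 1) * (p - 1) + p ^ (s - 1) := by
    rw [← Nat.mul_add_one, Nat.sub_add_cancel hp.one_le, pow_sub_one_mul hs]
  omega

end ZMod

open Matrix in
theorem isSubspace_iff_isSplitRange {p s n k : ℕ}
    {X : Submodule (ZMod (p ^ s)) (Fin n → ZMod (p ^ s))} :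
    IsSubspace p s n k X ↔ IsSplitRange (ZMod (p ^ s)) (Fin k → ZMod (p ^ s)) X := by
  constructor
  · rintro ⟨M, ⟨B, hMB⟩, rfl⟩
    exact ⟨M.vecMulLinear, ⟨B.vecMulLinear, LinearMap.ext fun x => by simp [hMB]⟩,
      range_vecMulLinear M⟩
  · rintro ⟨f, ⟨g, hgf⟩, rfl⟩
    refine ⟨(toMatrix' f)ᵀ, ⟨(toMatrix' g)ᵀ, ?_⟩, ?_⟩
    · rw [← transpose_mul, ← toMatrix'_comp, hgf, toMatrix'_id, transpose_one]
    · refine (congrArg range (LinearMap.ext fun x => ?_)).trans (range_vecMulLinear (toMatrix' f)ᵀ)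
      rw [vecMulLinear_apply, vecMul_transpose, ← Matrix.toLin'_apply, Matrix.toLin'_toMatrix']

theorem stmt_19_general (p s m n : ℕ) (hp : p.Prime) (hs : 1 ≤ s) (hm : 2 ≤ m)
    (P Q : Submodule (ZMod (p ^ s)) (Fin n → ZMod (p ^ s)))
    (hP : IsSubspace p s n (m - 1) P) (hQ : IsSubspace p s n (m + 1) Q) (hPQ : P < Q) :
    Nat.card {X : Submodule (ZMod (p ^ s)) (Fin n → ZMod (p ^ s)) //
        IsSubspace p s n m X ∧ P < X ∧ X < Q} = p ^ (s - 1) * (p + 1) := by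
  have := ZMod.isLocalRing_prime_pow hp (by omega : s ≠ 0)
  have : NeZero (p ^ s) := ⟨pow_ne_zero s hp.ne_zero⟩
  obtain ⟨k, rfl⟩ : ∃ k, m = k + 1 := ⟨m - 1, by omega⟩
  rw [Nat.add_sub_cancel, isSubspace_iff_isSplitRange] at hP
  obtain ⟨fQ, ⟨gQ, hgQ⟩, rfl⟩ := isSubspace_iff_isSplitRange.1 hQ
  obtain ⟨P', hP', rfl⟩ : ∃ P', IsSplitRange _ (Fin k → _) P' ∧ P'.map fQ = P :=
    ⟨P.comap fQ, (IsSplitRange.map_iff hgQ).1 (by rwa [map_comap_eq_self hPQ.le]),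
      map_comap_eq_self hPQ.le⟩
  obtain ⟨ψ⟩ := IsSplitRange.nonempty_quotient_linearEquiv (b := 2) hP'
  calc _ = Nat.card {X // IsSplitRange _ (Fin (k + 1) → _) X ∧ P'.map fQ ≤ X ∧ X ≤ range fQ} :=
        Nat.card_congr <| Equiv.subtypeEquivRight fun X => by
          rw [isSubspace_iff_isSplitRange]
          refine and_congr_right fun hX => and_congr (hP.lt_iff_le hX (by omega))
            (hX.lt_iff_le ⟨fQ, ⟨gQ, hgQ⟩, rfl⟩ (by omega))
    _ = Nat.card {X // IsSplitRange _ (Fin (k + 1) → _) X ∧ P' ≤ X} :=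
        IsSplitRange.card_map_le_le_range_eq hgQ P'
    _ = Nat.card {Y : Submodule _ (_ ⧸ P') // IsSplitRange _ (Fin 1 → _) Y} :=
        IsSplitRange.card_le_eq_card_quotient hP'
    _ = Nat.card {Y : Submodule _ (Fin 2 → _) // IsSplitRange _ (Fin 1 → _) Y} :=
        IsSplitRange.card_congr_linearEquiv ψ
    _ = Nat.card {Y : Submodule _ (Fin 2 → ZMod (p ^ s)) // IsSplitRange _ (ZMod (p ^ s)) Y} :=
        Nat.card_congr <| Equiv.subtypeEquivRight fun Y =>
          ⟨(·.congr (LinearEquiv.funUnique _ _ _)), (·.congr (LinearEquiv.funUnique _ _ _).symm)⟩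
    _ = p ^ (s - 1) * (p + 1) := by
      rw [card_isSplitRange_self_fin_two, Nat.card_zmod,
        ZMod.card_nonunits_prime_pow hp (by omega), ← pow_sub_one_mul (by omega : s ≠ 0)]
      ring

theorem stmt_19 (p s m n : ℕ) (hp : p.Prime) (hs : 1 ≤ s) (hm : 2 ≤ m) (hmn : m < n)
    (P Q : Submodule (ZMod (p ^ s)) (Fin n → ZMod (p ^ s)))
    (hP : IsSubspace p s n (m - 1) P) (hQ : IsSubspace p s n (m + 1) Q) (hPQ : P < Q) :
    Nat.card {X : Submodule (ZMod (p ^ s)) (Fin n → ZMod (p ^ s)) //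
        IsSubspace p s n m X ∧ P < X ∧ X < Q} = p ^ (s - 1) * (p + 1) :=
  stmt_19_general p s m n hp hs hm P Q hP hQ hPQ
end
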